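/- For observables x, y on a σ-lattice effect algebra E, the Olson order conditions are equivalent: y((-∞,t)) ≤ x((-∞,t)) for all t ∈ ℝ if and only if y((-∞,t]) ≤ x((-∞,t]) for all t ∈ ℝ. -/
import Mathlib


structure EffectAlgebra (E : Type*) where
  add : E → E → Option E
  zero : E
  one : E
  comm : ∀ a b, add a b = add b a
  assoc : ∀ a b c, (add a b).bind (fun d => add d c) = (add b c).bind (fun d => add a d)
  orth : ∀ a : E, ∃! b, add a b = some one
  pos_one : ∀ a b, add a one = some b → a = zero

namespace EffectAlgebra

variable {E : Type*}

/-- The induced order: `a ≤ b` iff `a + c = b` for some `c`. -/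
def le (EA : EffectAlgebra E) (a b : E) : Prop := ∃ c, EA.add a c = some b

/-- The orthosupplement `a'`, the unique element with `a + a' = 1`. -/
noncomputable def orthosupp (EA : EffectAlgebra E) (a : E) : E :=
  Classical.choose (EA.orth a).exists

/-- `s` is the supremum of `S` with respect to the induced order. -/
def IsSup (EA : EffectAlgebra E) (S : Set E) (s : E) : Prop :=
  (∀ x ∈ S, EA.le x s) ∧ ∀ b, (∀ x ∈ S, EA.le x b) → EA.le s b

/-- `s` is the infimum of `S` with respect to the induced order. -/
def IsInf (EA : EffectAlgebra E) (S : Set E) (s : E) : Prop :=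
  (∀ x ∈ S, EA.le s x) ∧ ∀ b, (∀ x ∈ S, EA.le b x) → EA.le b s

/-- Every increasing sequence has a supremum. -/
def MonotoneSigmaComplete (EA : EffectAlgebra E) : Prop :=
  ∀ f : ℕ → E, (∀ n, EA.le (f n) (f (n + 1))) → ∃ s, EA.IsSup (Set.range f) s

/-- A σ-lattice effect algebra: countable suprema and infima exist. -/
def SigmaLattice (EA : EffectAlgebra E) : Prop :=
  (∀ f : ℕ → E, ∃ s, EA.IsSup (Set.range f) s) ∧
  (∀ f : ℕ → E, ∃ s, EA.IsInf (Set.range f) s)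

/-- A complete lattice effect algebra: arbitrary suprema and infima exist. -/
def CompleteEA (EA : EffectAlgebra E) : Prop :=
  (∀ S : Set E, ∃ s, EA.IsSup S s) ∧ (∀ S : Set E, ∃ s, EA.IsInf S s)

/-- A lattice effect algebra: binary suprema and infima exist. -/
def LatticeEA (EA : EffectAlgebra E) : Prop :=
  (∀ a b : E, ∃ s, EA.IsSup {a, b} s) ∧ (∀ a b : E, ∃ s, EA.IsInf {a, b} s)

end EffectAlgebra

/-- Borel subsets of the real line. -/
abbrev BorelSet := {A : Set ℝ // MeasurableSet A}

def bIio (t : ℝ) : BorelSet := ⟨Set.Iio t, measurableSet_Iio⟩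
def bIic (t : ℝ) : BorelSet := ⟨Set.Iic t, measurableSet_Iic⟩

/-- An observable on a (monotone σ-complete) effect algebra: a unital,
additive map on the Borel σ-algebra preserving suprema of increasing sequences. -/
structure Observable {E : Type*} (EA : EffectAlgebra E) where
  toFun : BorelSet → E
  unital : toFun ⟨Set.univ, MeasurableSet.univ⟩ = EA.one
  additive : ∀ A B : BorelSet, Disjoint A.1 B.1 →
    EA.add (toFun A) (toFun B) = some (toFun ⟨A.1 ∪ B.1, A.2.union B.2⟩)
  sup_cont : ∀ f : ℕ → BorelSet, (∀ n, (f n).1 ⊆ (f (n + 1)).1) →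
    EA.IsSup (Set.range fun n => toFun (f n))
      (toFun ⟨⋃ n, (f n).1, MeasurableSet.iUnion (fun n => (f n).2)⟩)

namespace Observable

variable {E : Type*} {EA : EffectAlgebra E}

/-- The Olson (spectral) order on observables. -/
def OlsonLe (x y : Observable EA) : Prop :=
  ∀ t : ℝ, EA.le (y.toFun (bIio t)) (x.toFun (bIio t))

/-- An observable is bounded if `x(C) = 1` for some compact set `C`. -/
def Bounded (x : Observable EA) : Prop :=
  ∃ C : Set ℝ, ∃ hC : IsCompact C, x.toFun ⟨C, hC.measurableSet⟩ = EA.one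

/-- `x` is the question observable `q_a` of the element `a`. -/
def IsQuestion (x : Observable EA) (a : E) : Prop :=
  ∀ t : ℝ, x.toFun (bIio t) =
    if t ≤ 0 then EA.zero else if t ≤ 1 then EA.orthosupp a else EA.one

/-- The spectrum of `x` lies in `[0,1]`. -/
def SpectrumIn01 (x : Observable EA) : Prop :=
  x.toFun ⟨Set.Icc 0 1, measurableSet_Icc⟩ = EA.one

/-- `z` is the infimum of `S` in the Olson order on bounded observables. -/
def IsOlsonInf (S : Set (Observable EA)) (z : Observable EA) : Prop :=
  z.Bounded ∧ (∀ x ∈ S, z.OlsonLe x) ∧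
    ∀ w : Observable EA, w.Bounded → (∀ x ∈ S, w.OlsonLe x) → w.OlsonLe z

/-- `z` is the supremum of `S` in the Olson order on bounded observables. -/
def IsOlsonSup (S : Set (Observable EA)) (z : Observable EA) : Prop :=
  z.Bounded ∧ (∀ x ∈ S, x.OlsonLe z) ∧
    ∀ w : Observable EA, w.Bounded → (∀ x ∈ S, x.OlsonLe w) → z.OlsonLe w

end Observable

/-- A spectral resolution: monotone, with infimum 0, supremum 1, left continuous. -/
def SpectralResolution {E : Type*} (EA : EffectAlgebra E) (F : ℝ → E) : Prop :=
  (∀ t s : ℝ, t < s → EA.le (F t) (F s)) ∧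
  EA.IsInf (Set.range F) EA.zero ∧
  EA.IsSup (Set.range F) EA.one ∧
  ∀ s : ℝ, EA.IsSup (F '' Set.Iio s) (F s)

namespace EffectAlgebra

variable {E : Type*} (EA : EffectAlgebra E)

lemma add_one_zero' : EA.add EA.one EA.zero = some EA.one := by
  obtain ⟨b, hb, -⟩ := EA.orth EA.one
  have hb0 : b = EA.zero := EA.pos_one b EA.one (by rw [EA.comm]; exact hb)
  rw [← hb0]; exact hb

lemma add_zero' (a : E) : EA.add a EA.zero = some a := by
  have h1 : EA.add a (Classical.choose (EA.orth a).exists) = some EA.one :=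
    Classical.choose_spec (EA.orth a).exists
  set b := Classical.choose (EA.orth a).exists with hbdef
  have hassoc := EA.assoc EA.zero a b
  rw [h1] at hassoc
  simp only [Option.bind_some] at hassoc
  have hz1 : EA.add EA.zero EA.one = some EA.one := by
    rw [EA.comm]; exact EA.add_one_zero'
  rw [hz1] at hassoc
  cases hda : EA.add EA.zero a with
  | none => rw [hda] at hassoc; simp at hassoc
  | some d =>
    rw [hda] at hassoc
    simp only [Option.bind_some] at hassoc
    -- hassoc : EA.add d b = some EA.one
    have h2 : EA.add b d = some EA.one := by rw [EA.comm]; exact hassoc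
    have h3 : EA.add b a = some EA.one := by rw [EA.comm]; exact h1
    have : d = a := by
      obtain ⟨c, hc, huniq⟩ := EA.orth b
      rw [huniq d h2, huniq a h3]
    rw [this] at hda
    rw [EA.comm]; exact hda

lemma le_refl' (a : E) : EA.le a a := ⟨EA.zero, EA.add_zero' a⟩

lemma le_trans' {a b c : E} (hab : EA.le a b) (hbc : EA.le b c) : EA.le a c := by
  obtain ⟨u, hu⟩ := hab
  obtain ⟨v, hv⟩ := hbc
  have hassoc := EA.assoc a u v
  rw [hu] at hassoc
  simp only [Option.bind_some] at hassoc
  rw [hv] at hassoc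
  cases huv : EA.add u v with
  | none => rw [huv] at hassoc; simp at hassoc
  | some w =>
    rw [huv] at hassoc
    simp only [Option.bind_some] at hassoc
    exact ⟨w, hassoc.symm⟩

lemma orthosupp_spec (a : E) : EA.add a (EA.orthosupp a) = some EA.one :=
  Classical.choose_spec (EA.orth a).exists

lemma orthosupp_unique {a b : E} (h : EA.add a b = some EA.one) :
    b = EA.orthosupp a :=
  (EA.orth a).unique h (EA.orthosupp_spec a)

lemma orthosupp_orthosupp (a : E) : EA.orthosupp (EA.orthosupp a) = a := by
  have h : EA.add (EA.orthosupp a) a = some EA.one := by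
    rw [EA.comm]; exact EA.orthosupp_spec a
  exact (EA.orthosupp_unique h).symm

lemma orthosupp_anti {a b : E} (h : EA.le a b) :
    EA.le (EA.orthosupp b) (EA.orthosupp a) := by
  obtain ⟨c, hc⟩ := h
  have hb : EA.add b (EA.orthosupp b) = some EA.one := EA.orthosupp_spec b
  have hassoc := EA.assoc a c (EA.orthosupp b)
  rw [hc] at hassoc
  simp only [Option.bind_some] at hassoc
  rw [hb] at hassoc
  cases hcb : EA.add c (EA.orthosupp b) with
  | none => rw [hcb] at hassoc; simp at hassoc
  | some w =>
    rw [hcb] at hassoc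
    simp only [Option.bind_some] at hassoc
    have hw : w = EA.orthosupp a := EA.orthosupp_unique hassoc.symm
    refine ⟨c, ?_⟩
    rw [EA.comm, hcb, hw]

end EffectAlgebra

namespace Observable

variable {E : Type*} {EA : EffectAlgebra E}

lemma toFun_congr (x : Observable EA) {A B : BorelSet} (h : A.1 = B.1) :
    x.toFun A = x.toFun B := congrArg x.toFun (Subtype.ext h)

lemma mono (x : Observable EA) {A B : BorelSet} (h : A.1 ⊆ B.1) :
    EA.le (x.toFun A) (x.toFun B) := by
  have hadd := x.additive A ⟨B.1 \ A.1, B.2.diff A.2⟩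
    (Set.disjoint_sdiff_right.mono_right (le_refl _))
  refine ⟨x.toFun ⟨B.1 \ A.1, B.2.diff A.2⟩, ?_⟩
  rw [hadd]
  congr 1
  exact x.toFun_congr (Set.union_diff_cancel h)

lemma compl_eq (x : Observable EA) (A : BorelSet) :
    x.toFun ⟨A.1ᶜ, A.2.compl⟩ = EA.orthosupp (x.toFun A) := by
  apply EA.orthosupp_unique
  have hadd := x.additive A ⟨A.1ᶜ, A.2.compl⟩ (disjoint_compl_right)
  rw [hadd]
  congr 1
  rw [x.toFun_congr (B := ⟨Set.univ, MeasurableSet.univ⟩) (Set.union_compl_self A.1)]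
  exact x.unital

end Observable

private lemma iUnion_Iic_eq (t : ℝ) :
    (⋃ n : ℕ, Set.Iic (t - 1 / (n + 1))) = Set.Iio t := by
  ext r
  simp only [Set.mem_iUnion, Set.mem_Iic, Set.mem_Iio]
  constructor
  · rintro ⟨n, hn⟩
    have : (0:ℝ) < 1 / (n + 1) := by positivity
    linarith
  · intro hr
    obtain ⟨n, hn⟩ := exists_nat_one_div_lt (sub_pos.mpr hr)
    exact ⟨n, by linarith⟩

private lemma iUnion_Ici_eq (t : ℝ) :
    (⋃ n : ℕ, Set.Ici (t + 1 / (n + 1))) = Set.Ioi t := by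
  ext r
  simp only [Set.mem_iUnion, Set.mem_Ici, Set.mem_Ioi]
  constructor
  · rintro ⟨n, hn⟩
    have : (0:ℝ) < 1 / (n + 1) := by positivity
    linarith
  · intro hr
    obtain ⟨n, hn⟩ := exists_nat_one_div_lt (sub_pos.mpr hr)
    exact ⟨n, by linarith⟩

private lemma one_div_succ_antitone (n : ℕ) :
    (1:ℝ) / (n + 1 + 1) ≤ 1 / (n + 1) := by
  apply one_div_le_one_div_of_le <;> push_cast <;> linarith

/-- the two formulations of the Olson order agree:
`y((-∞,t)) ≤ x((-∞,t))` for all `t` iff `y((-∞,t]) ≤ x((-∞,t])` for all `t`. -/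
theorem stmt16 {E : Type*} (EA : EffectAlgebra E) (hE : EA.SigmaLattice)
    (x y : Observable EA) :
    (∀ t : ℝ, EA.le (y.toFun (bIio t)) (x.toFun (bIio t))) ↔
    (∀ t : ℝ, EA.le (y.toFun (bIic t)) (x.toFun (bIic t))) := by
  constructor
  · -- Iio case implies Iic case
    intro h t
    -- f n = Ici (t + 1/(n+1)), increasing, union = Ioi t
    set f : ℕ → BorelSet := fun n => ⟨Set.Ici (t + 1 / (n + 1)), measurableSet_Ici⟩ with hf
    have hmono : ∀ n, (f n).1 ⊆ (f (n + 1)).1 := by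
      intro n
      apply Set.Ici_subset_Ici.mpr
      have := one_div_succ_antitone n
      push_cast
      linarith
    have hsup := x.sup_cont f hmono
    have hU : (⋃ n, (f n).1) = Set.Ioi t := by
      simpa [hf] using iUnion_Ici_eq t
    rw [x.toFun_congr (B := ⟨Set.Ioi t, measurableSet_Ioi⟩) hU] at hsup
    -- each x(f n) = (x(Iio (t+1/(n+1))))'
    have hfn : ∀ n : ℕ, x.toFun (f n) =
        EA.orthosupp (x.toFun (bIio (t + 1 / (n + 1)))) := by
      intro n
      rw [← x.compl_eq (bIio (t + 1 / (n + 1)))]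
      exact x.toFun_congr (by simp [bIio, hf, Set.compl_Iio])
    -- y(Iic t) ≤ x(Iio (t+1/(n+1))) for each n
    have hkey : ∀ n : ℕ, EA.le (y.toFun (bIic t)) (x.toFun (bIio (t + 1 / (n + 1)))) := by
      intro n
      refine EA.le_trans' (y.mono ?_) (h _)
      intro r hr
      simp only [bIic, Set.mem_Iic] at hr
      simp only [bIio, Set.mem_Iio]
      have : (0:ℝ) < 1 / ((n:ℝ) + 1) := by positivity
      linarith
    -- so each x(f n) ≤ (y(Iic t))'
    have hle : ∀ z ∈ Set.range (fun n => x.toFun (f n)),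
        EA.le z (EA.orthosupp (y.toFun (bIic t))) := by
      rintro z ⟨n, rfl⟩
      show EA.le (x.toFun (f n)) (EA.orthosupp (y.toFun (bIic t)))
      rw [hfn n]
      exact EA.orthosupp_anti (hkey n)
    have h2 := hsup.2 _ hle
    -- x(Ioi t) ≤ (y(Iic t))', hence y(Iic t) ≤ (x(Ioi t))' = x(Iic t)
    have h3 := EA.orthosupp_anti h2
    rw [EA.orthosupp_orthosupp] at h3
    have h4 : EA.orthosupp (x.toFun ⟨Set.Ioi t, measurableSet_Ioi⟩) = x.toFun (bIic t) := by
      rw [show x.toFun ⟨Set.Ioi t, measurableSet_Ioi⟩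
            = EA.orthosupp (x.toFun (bIic t)) from ?_]
      · exact EA.orthosupp_orthosupp _
      · rw [← x.compl_eq (bIic t)]
        exact x.toFun_congr (by simp [bIic, Set.compl_Iic])
    rwa [h4] at h3
  · -- Iic case implies Iio case
    intro h t
    set f : ℕ → BorelSet := fun n => ⟨Set.Iic (t - 1 / (n + 1)), measurableSet_Iic⟩ with hf
    have hmono : ∀ n, (f n).1 ⊆ (f (n + 1)).1 := by
      intro n
      apply Set.Iic_subset_Iic.mpr
      have := one_div_succ_antitone n
      push_cast
      linarith
    have hsup := y.sup_cont f hmono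
    have hU : (⋃ n, (f n).1) = Set.Iio t := by
      simpa [hf] using iUnion_Iic_eq t
    rw [y.toFun_congr (B := bIio t) hU] at hsup
    apply hsup.2
    rintro z ⟨n, rfl⟩
    show EA.le (y.toFun (f n)) (x.toFun (bIio t))
    refine EA.le_trans' (h (t - 1 / (n + 1))) (x.mono ?_)
    intro r hr
    simp only [bIic, Set.mem_Iic] at hr
    simp only [bIio, Set.mem_Iio]
    have : (0:ℝ) < 1 / ((n:ℝ) + 1) := by positivity
    linarith
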